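/- For every natural number m, Σ_{ℓ=0}^{m} C_{2m-2ℓ} C_{2ℓ} = 4^m C_m, i.e., the sum over even-index terms of the Catalan convolution of total index 2m equals 4^m times C_m. -/

import Mathlib

/-!
Both sides satisfy `(m + 2) a (m + 1) = 8 (2m + 1) a m` with `a 0 = 1`. For `4^m C_m` this is
the Catalan ratio `C_{m+1} / C_m = 2(2m + 1) / (m + 2)`. For the sum it is creative telescoping
(Zeilberger): with `F n ℓ = C_{2(n-ℓ)} C_{2ℓ}` and `G n ℓ = R n ℓ * F n ℓ`, where
`R n ℓ = ℓ (6nℓ - 4ℓ² + 3n + 1) / (n (2n + 1))`,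
`8 (2m + 1) F m ℓ - (m + 2) F (m + 1) ℓ = G (m + 1) (ℓ + 1) - G (m + 1) ℓ`,
a rational identity once `C_{2k+2} / C_{2k}` is substituted. Summing over `ℓ ≤ m` and using
`R n 0 = 0`, `R n n = n + 1` gives the recurrence.
-/

open Finset

theorem add_two_mul_catalan_succ (n : ℕ) :
    (n + 2) * catalan (n + 1) = 2 * (2 * n + 1) * catalan n := by
  refine Nat.eq_of_mul_eq_mul_left n.succ_pos ?_
  calc (n + 1) * ((n + 2) * catalan (n + 1)) = (n + 1) * (n + 1).centralBinom := by
        rw [← succ_mul_catalan_eq_centralBinom]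
    _ = 2 * (2 * n + 1) * ((n + 1) * catalan n) := by
        rw [Nat.succ_mul_centralBinom_succ, succ_mul_catalan_eq_centralBinom]
    _ = (n + 1) * (2 * (2 * n + 1) * catalan n) := by ring

theorem cast_catalan_two_mul_succ (n : ℕ) :
    (catalan (2 * (n + 1)) : ℚ)
      = 2 * (4 * n + 1) * (4 * n + 3) / ((n + 1) * (2 * n + 3)) * catalan (2 * n) := by
  have h₁ : ((2 * n + 2 : ℕ) : ℚ) * catalan (2 * n + 1)
      = 2 * (2 * (2 * n) + 1) * catalan (2 * n) := by
    exact_mod_cast add_two_mul_catalan_succ (2 * n)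
  have h₂ : ((2 * n + 1 + 2 : ℕ) : ℚ) * catalan (2 * n + 1 + 1)
      = 2 * (2 * (2 * n + 1 : ℕ) + 1) * catalan (2 * n + 1) := by
    exact_mod_cast add_two_mul_catalan_succ (2 * n + 1)
  rw [show 2 * (n + 1) = 2 * n + 1 + 1 by ring]
  push_cast at h₁ h₂
  field_simp
  linear_combination (n + 1 : ℚ) * h₂ + (4 * n + 3 : ℚ) * h₁

def evenCatalanTerm (n ℓ : ℕ) : ℚ := catalan (2 * (n - ℓ)) * catalan (2 * ℓ)

def evenCatalanCertificate (n ℓ : ℕ) : ℚ :=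
  ℓ * (6 * n * ℓ - 4 * ℓ ^ 2 + 3 * n + 1) / (n * (2 * n + 1)) * evenCatalanTerm n ℓ

theorem evenCatalanCertificate_zero_right (n : ℕ) : evenCatalanCertificate n 0 = 0 := by
  simp [evenCatalanCertificate]

theorem evenCatalanCertificate_self (n : ℕ) :
    evenCatalanCertificate (n + 1) (n + 1) = (n + 2) * evenCatalanTerm (n + 1) (n + 1) := by
  rw [evenCatalanCertificate]
  congr 1
  push_cast
  field_simp
  ring

theorem evenCatalanTerm_creative_telescoping {m ℓ : ℕ} (h : ℓ ≤ m) :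
    8 * (2 * m + 1) * evenCatalanTerm m ℓ - (m + 2) * evenCatalanTerm (m + 1) ℓ
      = evenCatalanCertificate (m + 1) (ℓ + 1) - evenCatalanCertificate (m + 1) ℓ := by
  obtain ⟨k, rfl⟩ := Nat.exists_eq_add_of_le h
  simp only [evenCatalanCertificate, evenCatalanTerm, Nat.add_sub_cancel_left,
    Nat.add_sub_add_right, show ℓ + k + 1 - ℓ = k + 1 by omega]
  rw [cast_catalan_two_mul_succ k, cast_catalan_two_mul_succ ℓ]
  push_cast
  field_simp
  ring

theorem add_two_mul_sum_catalan_even_succ (m : ℕ) :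
    (m + 2) * ∑ ℓ ∈ range (m + 2), catalan (2 * (m + 1 - ℓ)) * catalan (2 * ℓ)
      = 8 * (2 * m + 1) * ∑ ℓ ∈ range (m + 1), catalan (2 * (m - ℓ)) * catalan (2 * ℓ) := by
  suffices (m + 2) * ∑ ℓ ∈ range (m + 2), evenCatalanTerm (m + 1) ℓ
      = 8 * (2 * m + 1) * ∑ ℓ ∈ range (m + 1), evenCatalanTerm m ℓ by
    simp only [evenCatalanTerm] at this
    exact_mod_cast this
  have step : ∀ ℓ ∈ range (m + 1), _ := fun ℓ hℓ =>
    evenCatalanTerm_creative_telescoping (Nat.lt_succ_iff.mp (mem_range.mp hℓ))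
  have telescope := sum_range_sub (evenCatalanCertificate (m + 1)) (m + 1)
  rw [← sum_congr rfl step, sum_sub_distrib, ← mul_sum, ← mul_sum, evenCatalanCertificate_self,
    evenCatalanCertificate_zero_right] at telescope
  rw [sum_range_succ]
  linear_combination -telescope

/-- The even-index Catalan convolution identity: Σ_{ℓ=0}^m C_{2(m-ℓ)} C_{2ℓ} = 4^m C_m. -/
theorem catalan_even_convolution (m : ℕ) :
    ∑ ℓ ∈ Finset.range (m + 1), catalan (2 * (m - ℓ)) * catalan (2 * ℓ)
      = 4 ^ m * catalan m := by
  induction m with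
  | zero => simp
  | succ m ih =>
    refine Nat.eq_of_mul_eq_mul_left (Nat.succ_pos (m + 1)) ?_
    calc (m + 2) * ∑ ℓ ∈ range (m + 1 + 1), catalan (2 * (m + 1 - ℓ)) * catalan (2 * ℓ)
        = 4 ^ (m + 1) * (2 * (2 * m + 1) * catalan m) := by
          rw [add_two_mul_sum_catalan_even_succ, ih]
          ring
      _ = (m + 2) * (4 ^ (m + 1) * catalan (m + 1)) := by
          rw [← add_two_mul_catalan_succ]
          ring
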